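/- (Lemma 3.4) Let a, b, c be real with c·(b²−4ac) ≠ 0 and write D = b²−4ac. Let Σ₁ ⊆ ℝ be an open interval and let I₀₂, I₂₂ : Σ₁ → ℝ be twice differentiable functions satisfying the Picard–Fuchs system I₀₂ = ((4/3)h + 1/(3c))·I₀₂' + (−b/(3c) − 2/3)·I₂₂' and I₂₂ = ((4(b+2c)/(15D))·h + (b+2c)/(15cD))·I₀₂' + ((4/5)h − (b²+16bc+16c²+12ac)/(15cD))·I₂₂' on Σ₁. Let n ≥ 2 and let l₁, l₂ be real polynomials with deg l₁ ≤ ⌊(n−2)/4⌋ and deg l₂ ≤ ⌊n/4⌋ − 1, and set Θ₃(h) = l₁(h)·I₀₂(h) + l₂(h)·I₂₂(h). Then, with n₁ = ⌊(n−2)/4⌋ + ⌊n/4⌋ + 2, there exist real polynomials R₁, R₂, R₃, not all zero, with deg R₃ ≤ n₁, deg R₂ ≤ n₁ − 1, deg R₁ ≤ n₁ − 2, such that R₃(h)·Θ₃''(h) + R₂(h)·Θ₃'(h) + R₁(h)·Θ₃(h) = 0 for all h ∈ Σ₁. -/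
import Mathlib

open Polynomial

lemma st19_wb4 {m n : ℕ} (h : m ≤ n) : ((m : ℕ) : WithBot ℕ) ≤ ((n : ℕ) : WithBot ℕ) := by
  simp only [Nat.cast_withBot, WithBot.coe_le_coe]
  exact h

lemma st19_wb1 {x y : WithBot ℕ} {m n : ℕ} (hx : x ≤ (m : ℕ)) (hy : y ≤ (n : ℕ)) :
    x + y ≤ ((m + n : ℕ) : WithBot ℕ) := by
  have : ((m + n : ℕ) : WithBot ℕ) = ((m : ℕ) : WithBot ℕ) + ((n : ℕ) : WithBot ℕ) := by
    simp [Nat.cast_withBot]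
  rw [this]
  exact add_le_add hx hy

lemma st19_wb2 {x y : WithBot ℕ} {m n : ℕ} (hx : x ≤ (m : ℕ)) (hy : y < (n : ℕ)) :
    x + y < ((m + n : ℕ) : WithBot ℕ) := by
  induction x using WithBot.recBotCoe with
  | bot =>
    rw [WithBot.bot_add]
    simp only [Nat.cast_withBot]
    exact WithBot.bot_lt_coe _
  | coe i =>
    induction y using WithBot.recBotCoe with
    | bot =>
      rw [WithBot.add_bot]
      simp only [Nat.cast_withBot]
      exact WithBot.bot_lt_coe _
    | coe j =>
      simp only [Nat.cast_withBot, WithBot.coe_le_coe, WithBot.coe_lt_coe] at hx hy ⊢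
      rw [← WithBot.coe_add, WithBot.coe_lt_coe]
      omega

lemma st19_wb3 {x : WithBot ℕ} {k : ℕ} (h : x < ((k + 1 : ℕ) : WithBot ℕ)) :
    x ≤ ((k : ℕ) : WithBot ℕ) := by
  induction x using WithBot.recBotCoe with
  | bot => exact bot_le
  | coe i =>
    simp only [Nat.cast_withBot, WithBot.coe_le_coe, WithBot.coe_lt_coe] at h ⊢
    omega

lemma st19_degC (x : ℝ) : (Polynomial.C x).degree ≤ ((0 : ℕ) : WithBot ℕ) := by
  exact_mod_cast Polynomial.degree_C_le

lemma st19_degMul {p q : Polynomial ℝ} {m n : ℕ} (hp : p.degree ≤ (m : ℕ)) (hq : q.degree ≤ (n : ℕ)) :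
    (p * q).degree ≤ ((m + n : ℕ) : WithBot ℕ) :=
  (degree_mul_le p q).trans (st19_wb1 hp hq)

lemma st19_degMulLt {p q : Polynomial ℝ} {m n : ℕ} (hp : p.degree ≤ (m : ℕ)) (hq : q.degree < (n : ℕ)) :
    (p * q).degree < ((m + n : ℕ) : WithBot ℕ) :=
  lt_of_le_of_lt (degree_mul_le p q) (st19_wb2 hp hq)

lemma st19_degDerivLt {q : Polynomial ℝ} {n : ℕ} (hq : q.degree ≤ (n : ℕ)) :
    (derivative q).degree < ((n : ℕ) : WithBot ℕ) := by
  rcases eq_or_ne q 0 with rfl | h0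
  · rw [derivative_zero, degree_zero]
    simp only [Nat.cast_withBot]
    exact WithBot.bot_lt_coe _
  · exact lt_of_lt_of_le (degree_derivative_lt h0) hq

lemma st19_degMulDerivLt {p q : Polynomial ℝ} {m n : ℕ} (hp : p.degree ≤ (m : ℕ))
    (hq : q.degree ≤ (n : ℕ)) : (p * derivative q).degree < ((m + n : ℕ) : WithBot ℕ) :=
  lt_of_le_of_lt (degree_mul_le _ _) (st19_wb2 hp (st19_degDerivLt hq))

lemma st19_LM2 {p q : Polynomial ℝ} {m n : ℕ} (hp : p.degree ≤ ((m + 1 : ℕ) : WithBot ℕ))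
    (hq : q.degree < (n : ℕ)) : (p * derivative q).degree < ((m + n : ℕ) : WithBot ℕ) := by
  rcases eq_or_ne (derivative q) 0 with e | e
  · rw [e, mul_zero, degree_zero]
    simp only [Nat.cast_withBot]
    exact WithBot.bot_lt_coe _
  · have hq0 : q ≠ 0 := by rintro rfl; simp at e
    have h1 : (derivative q).degree < q.degree := degree_derivative_lt hq0
    rw [degree_eq_natDegree hq0] at hq h1
    rw [degree_eq_natDegree e] at h1
    simp only [Nat.cast_withBot, WithBot.coe_lt_coe] at hq h1
    have hd : (derivative q).degree ≤ (((derivative q).natDegree : ℕ) : WithBot ℕ) := by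
      simp only [Nat.cast_withBot]
      exact degree_le_natDegree
    refine lt_of_le_of_lt (st19_degMul hp hd) ?_
    simp only [Nat.cast_withBot, WithBot.coe_lt_coe]
    omega

theorem stmt19 (a b c : ℝ) (habc : c * (b ^ 2 - 4 * a * c) ≠ 0)
    (S : Set ℝ) (hSo : IsOpen S) (hSc : Convex ℝ S)
    (I02 I22 : ℝ → ℝ)
    (hI02 : ∀ h ∈ S, DifferentiableAt ℝ I02 h)
    (hI02' : ∀ h ∈ S, DifferentiableAt ℝ (deriv I02) h)
    (hI22 : ∀ h ∈ S, DifferentiableAt ℝ I22 h)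
    (hI22' : ∀ h ∈ S, DifferentiableAt ℝ (deriv I22) h)
    (hPF1 : ∀ h ∈ S, I02 h = ((4 / 3) * h + 1 / (3 * c)) * deriv I02 h
        + (-(b / (3 * c)) - 2 / 3) * deriv I22 h)
    (hPF2 : ∀ h ∈ S, I22 h =
        ((4 * (b + 2 * c) / (15 * (b ^ 2 - 4 * a * c))) * h
            + (b + 2 * c) / (15 * c * (b ^ 2 - 4 * a * c))) * deriv I02 h
        + ((4 / 5) * h
            - (b ^ 2 + 16 * b * c + 16 * c ^ 2 + 12 * a * c)
              / (15 * c * (b ^ 2 - 4 * a * c))) * deriv I22 h)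
    (n : ℕ) (hn : 2 ≤ n)
    (l₁ l₂ : Polynomial ℝ)
    (hl₁ : l₁.degree ≤ (((n - 2) / 4 : ℕ) : WithBot ℕ))
    (hl₂ : l₂.degree < ((n / 4 : ℕ) : WithBot ℕ)) :
    ∃ R₁ R₂ R₃ : Polynomial ℝ,
      ¬(R₁ = 0 ∧ R₂ = 0 ∧ R₃ = 0) ∧
      R₃.degree ≤ ((((n - 2) / 4 + n / 4 + 2 : ℕ)) : WithBot ℕ) ∧
      R₂.degree ≤ ((((n - 2) / 4 + n / 4 + 1 : ℕ)) : WithBot ℕ) ∧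
      R₁.degree ≤ ((((n - 2) / 4 + n / 4 : ℕ)) : WithBot ℕ) ∧
      ∀ Θ : ℝ → ℝ, (∀ h : ℝ, Θ h = l₁.eval h * I02 h + l₂.eval h * I22 h) →
        ∀ h ∈ S,
          R₃.eval h * deriv (deriv Θ) h + R₂.eval h * deriv Θ h + R₁.eval h * Θ h = 0 := by
  classical
  set K : ℕ := (n - 2) / 4 with hK
  set N : ℕ := n / 4 with hN
  have hKN : K ≤ N := by omega
  have hNK : N ≤ K + 1 := by omega
  -- the scalar constant σ
  set s : ℝ := 4 * (b + 2 * c) / (15 * (b ^ 2 - 4 * a * c)) with hs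
  -- the Picard–Fuchs matrix entries as polynomials
  set M11 : Polynomial ℝ := Polynomial.C (4 / 3 : ℝ) * Polynomial.X
      + Polynomial.C (1 / (3 * c)) with hM11
  set M12 : Polynomial ℝ := Polynomial.C (-(b / (3 * c)) - 2 / 3) with hM12
  set M21 : Polynomial ℝ := Polynomial.C s * Polynomial.X
      + Polynomial.C ((b + 2 * c) / (15 * c * (b ^ 2 - 4 * a * c))) with hM21
  set M22 : Polynomial ℝ := Polynomial.C (4 / 5 : ℝ) * Polynomial.X
      + Polynomial.C (-((b ^ 2 + 16 * b * c + 16 * c ^ 2 + 12 * a * c)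
          / (15 * c * (b ^ 2 - 4 * a * c)))) with hM22
  set dp : Polynomial ℝ := M11 * M22 - M12 * M21 with hdp
  set E11 : Polynomial ℝ := Polynomial.C (-(1 / 3) : ℝ) * M22 + Polynomial.C s * M12 with hE11
  set E12 : Polynomial ℝ := Polynomial.C (-(1 / 5) : ℝ) * M12 with hE12
  set E21 : Polynomial ℝ := Polynomial.C (1 / 3 : ℝ) * M21 + Polynomial.C (-s) * M11 with hE21
  set E22 : Polynomial ℝ := Polynomial.C (1 / 5 : ℝ) * M11 with hE22
  set u₁ : Polynomial ℝ := M11 * l₁ + M21 * l₂ with hu₁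
  set u₂ : Polynomial ℝ := M12 * l₁ + M22 * l₂ with hu₂
  set v₁ : Polynomial ℝ := M11 * Polynomial.derivative l₁ + M21 * Polynomial.derivative l₂ + l₁
    with hv₁
  set v₂ : Polynomial ℝ := M12 * Polynomial.derivative l₁ + M22 * Polynomial.derivative l₂ + l₂
    with hv₂
  set w₁ : Polynomial ℝ := dp * Polynomial.derivative v₁ + (E11 * v₁ + E21 * v₂) with hw₁
  set w₂ : Polynomial ℝ := dp * Polynomial.derivative v₂ + (E12 * v₁ + E22 * v₂) with hw₂
  set α : Polynomial ℝ := v₁ * u₂ - u₁ * v₂ with hα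
  set β : Polynomial ℝ := u₁ * w₂ - u₂ * w₁ with hβ
  set γ : Polynomial ℝ := w₁ * v₂ - w₂ * v₁ with hγ
  -- derivatives of matrix entries
  have hdM11 : Polynomial.derivative M11 = Polynomial.C (4 / 3 : ℝ) := by
    rw [hM11]; simp
  have hdM12 : Polynomial.derivative M12 = 0 := by rw [hM12]; simp
  have hdM21 : Polynomial.derivative M21 = Polynomial.C s := by rw [hM21]; simp
  have hdM22 : Polynomial.derivative M22 = Polynomial.C (4 / 5 : ℝ) := by rw [hM22]; simp
  -- degree bounds
  have dM11 : M11.degree ≤ ((1 : ℕ) : WithBot ℕ) := by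
    rw [hM11]; exact_mod_cast Polynomial.degree_linear_le
  have dM12 : M12.degree ≤ ((0 : ℕ) : WithBot ℕ) := by
    rw [hM12]; exact_mod_cast Polynomial.degree_C_le
  have dM21 : M21.degree ≤ ((1 : ℕ) : WithBot ℕ) := by
    rw [hM21]; exact_mod_cast Polynomial.degree_linear_le
  have dM22 : M22.degree ≤ ((1 : ℕ) : WithBot ℕ) := by
    rw [hM22]; exact_mod_cast Polynomial.degree_linear_le
  have dE11 : E11.degree ≤ ((1 : ℕ) : WithBot ℕ) := by
    rw [hE11]
    refine (Polynomial.degree_add_le _ _).trans (max_le ?_ ?_)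
    · exact ((st19_degMul (st19_degC _) dM22).trans (st19_wb4 (by omega)))
    · exact ((st19_degMul (st19_degC _) dM12).trans (st19_wb4 (by omega)))
  have dE12 : E12.degree ≤ ((0 : ℕ) : WithBot ℕ) := by
    rw [hE12]
    exact (st19_degMul (st19_degC _) dM12).trans (st19_wb4 (by omega))
  have dE21 : E21.degree ≤ ((1 : ℕ) : WithBot ℕ) := by
    rw [hE21]
    refine (Polynomial.degree_add_le _ _).trans (max_le ?_ ?_)
    · exact ((st19_degMul (st19_degC _) dM21).trans (st19_wb4 (by omega)))
    · exact ((st19_degMul (st19_degC _) dM11).trans (st19_wb4 (by omega)))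
  have dE22 : E22.degree ≤ ((1 : ℕ) : WithBot ℕ) := by
    rw [hE22]
    exact (st19_degMul (st19_degC _) dM11).trans (st19_wb4 (by omega))
  have ddp : dp.degree ≤ ((2 : ℕ) : WithBot ℕ) := by
    rw [hdp]
    refine (Polynomial.degree_sub_le _ _).trans (max_le ?_ ?_)
    · exact (st19_degMul dM11 dM22).trans (st19_wb4 (by omega))
    · exact (st19_degMul dM12 dM21).trans (st19_wb4 (by omega))
  have du₁ : u₁.degree ≤ ((K + 1 : ℕ) : WithBot ℕ) := by
    rw [hu₁]
    refine (Polynomial.degree_add_le _ _).trans (max_le ?_ ?_)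
    · exact (st19_degMul dM11 hl₁).trans (st19_wb4 (by omega))
    · exact (st19_wb3 (lt_of_lt_of_le (st19_degMulLt dM21 hl₂)
        (st19_wb4 (show 1 + N ≤ N + 1 by omega)))).trans (st19_wb4 (show N ≤ K + 1 by omega))
  have du₂ : u₂.degree ≤ ((N : ℕ) : WithBot ℕ) := by
    rw [hu₂]
    refine (Polynomial.degree_add_le _ _).trans (max_le ?_ ?_)
    · exact (st19_degMul dM12 hl₁).trans (st19_wb4 (by omega))
    · exact st19_wb3 (lt_of_lt_of_le (st19_degMulLt dM22 hl₂)
        (st19_wb4 (show 1 + N ≤ N + 1 by omega)))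
  have dv₁ : v₁.degree ≤ ((K : ℕ) : WithBot ℕ) := by
    rw [hv₁]
    refine (Polynomial.degree_add_le _ _).trans (max_le ((Polynomial.degree_add_le _ _).trans
      (max_le ?_ ?_)) hl₁)
    · exact st19_wb3 (lt_of_lt_of_le (st19_degMulDerivLt dM11 hl₁)
        (st19_wb4 (show 1 + K ≤ K + 1 by omega)))
    · exact st19_wb3 (lt_of_lt_of_le (st19_LM2 (p := M21) (m := 0)
        (dM21.trans (st19_wb4 (show 1 ≤ 0 + 1 by omega))) hl₂)
        (st19_wb4 (show 0 + N ≤ K + 1 by omega)))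
  have dv₂ : v₂.degree < ((N : ℕ) : WithBot ℕ) := by
    rw [hv₂]
    refine lt_of_le_of_lt (Polynomial.degree_add_le _ _) (max_lt (lt_of_le_of_lt
      (Polynomial.degree_add_le _ _) (max_lt ?_ ?_)) hl₂)
    · exact lt_of_lt_of_le (st19_degMulDerivLt dM12 hl₁) (st19_wb4 (by omega))
    · exact lt_of_lt_of_le (st19_LM2 (p := M22) (m := 0)
        (dM22.trans (st19_wb4 (by omega))) hl₂) (st19_wb4 (by omega))
  have dw₁ : w₁.degree ≤ ((K + 1 : ℕ) : WithBot ℕ) := by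
    rw [hw₁]
    refine (Polynomial.degree_add_le _ _).trans (max_le ?_ ((Polynomial.degree_add_le _ _).trans
      (max_le ?_ ?_)))
    · exact st19_wb3 (lt_of_lt_of_le (st19_degMulDerivLt ddp dv₁)
        (st19_wb4 (show 2 + K ≤ (K + 1) + 1 by omega)))
    · exact (st19_degMul dE11 dv₁).trans (st19_wb4 (by omega))
    · exact (st19_wb3 (lt_of_lt_of_le (st19_degMulLt dE21 dv₂)
        (st19_wb4 (show 1 + N ≤ N + 1 by omega)))).trans (st19_wb4 (show N ≤ K + 1 by omega))
  have dw₂ : w₂.degree ≤ ((N : ℕ) : WithBot ℕ) := by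
    rw [hw₂]
    refine (Polynomial.degree_add_le _ _).trans (max_le ?_ ((Polynomial.degree_add_le _ _).trans
      (max_le ?_ ?_)))
    · exact st19_wb3 (lt_of_lt_of_le (st19_LM2 (p := dp) (m := 1)
        (ddp.trans (st19_wb4 (show 2 ≤ 1 + 1 by omega))) dv₂)
        (st19_wb4 (show 1 + N ≤ N + 1 by omega)))
    · exact (st19_degMul dE12 dv₁).trans (st19_wb4 (by omega))
    · exact st19_wb3 (lt_of_lt_of_le (st19_degMulLt dE22 dv₂)
        (st19_wb4 (show 1 + N ≤ N + 1 by omega)))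
  have dα : α.degree ≤ ((K + N : ℕ) : WithBot ℕ) := by
    rw [hα]
    refine (Polynomial.degree_sub_le _ _).trans (max_le ?_ ?_)
    · exact (st19_degMul dv₁ du₂).trans (st19_wb4 (by omega))
    · exact st19_wb3 (lt_of_lt_of_le (st19_degMulLt du₁ dv₂)
        (st19_wb4 (show K + 1 + N ≤ (K + N) + 1 by omega)))
  have dβ : β.degree ≤ ((K + N + 1 : ℕ) : WithBot ℕ) := by
    rw [hβ]
    refine (Polynomial.degree_sub_le _ _).trans (max_le ?_ ?_)
    · exact (st19_degMul du₁ dw₂).trans (st19_wb4 (by omega))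
    · exact (st19_degMul du₂ dw₁).trans (st19_wb4 (by omega))
  have dγ : γ.degree ≤ ((K + N : ℕ) : WithBot ℕ) := by
    rw [hγ]
    refine (Polynomial.degree_sub_le _ _).trans (max_le ?_ ?_)
    · exact st19_wb3 (lt_of_lt_of_le (st19_degMulLt dw₁ dv₂)
        (st19_wb4 (show K + 1 + N ≤ (K + N) + 1 by omega)))
    · exact (st19_degMul dw₂ dv₁).trans (st19_wb4 (by omega))
  have dR₃ : (α * dp).degree ≤ ((K + N + 2 : ℕ) : WithBot ℕ) := by
    exact (st19_degMul dα ddp).trans (st19_wb4 (by omega))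
  -- dp is a nonzero polynomial
  have hdeg2 : (M11 * M22).degree = ((2 : ℕ) : WithBot ℕ) := by
    rw [hM11, hM22, Polynomial.degree_mul,
      Polynomial.degree_linear (by norm_num : (4 / 3 : ℝ) ≠ 0),
      Polynomial.degree_linear (by norm_num : (4 / 5 : ℝ) ≠ 0)]
    decide
  have hdpdeg : dp.degree = ((2 : ℕ) : WithBot ℕ) := by
    rw [hdp, Polynomial.degree_sub_eq_left_of_degree_lt, hdeg2]
    rw [hdeg2]
    refine lt_of_le_of_lt (st19_degMul (st19_degC _) dM21) ?_
    simp only [Nat.cast_withBot, WithBot.coe_lt_coe]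
    omega
  have hdpne : dp ≠ 0 := by
    intro h0
    rw [h0, Polynomial.degree_zero] at hdpdeg
    exact absurd hdpdeg (by simp [Nat.cast_withBot])
  -- the cross-product syzygy (a polynomial ring identity)
  have PId1 : α * w₁ + (β * v₁ + γ * u₁) = 0 := by rw [hα, hβ, hγ]; ring
  have PId2 : α * w₂ + (β * v₂ + γ * u₂) = 0 := by rw [hα, hβ, hγ]; ring
  have F1 : ∀ x : ℝ, Polynomial.eval x α * Polynomial.eval x w₁
      + (Polynomial.eval x β * Polynomial.eval x v₁
        + Polynomial.eval x γ * Polynomial.eval x u₁) = 0 := by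
    intro x
    have := congrArg (Polynomial.eval x) PId1
    simpa only [Polynomial.eval_add, Polynomial.eval_mul, Polynomial.eval_zero] using this
  have F2 : ∀ x : ℝ, Polynomial.eval x α * Polynomial.eval x w₂
      + (Polynomial.eval x β * Polynomial.eval x v₂
        + Polynomial.eval x γ * Polynomial.eval x u₂) = 0 := by
    intro x
    have := congrArg (Polynomial.eval x) PId2
    simpa only [Polynomial.eval_add, Polynomial.eval_mul, Polynomial.eval_zero] using this
  -- pointwise expression of Θ, Θ', Θ'' through the basis (I02', I22')
  have key : ∀ Θ : ℝ → ℝ, (∀ x : ℝ, Θ x = l₁.eval x * I02 x + l₂.eval x * I22 x) →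
      ∀ h ∈ S,
        Θ h = Polynomial.eval h u₁ * deriv I02 h + Polynomial.eval h u₂ * deriv I22 h ∧
        deriv Θ h = Polynomial.eval h v₁ * deriv I02 h + Polynomial.eval h v₂ * deriv I22 h ∧
        Polynomial.eval h dp * deriv (deriv Θ) h
          = Polynomial.eval h w₁ * deriv I02 h + Polynomial.eval h w₂ * deriv I22 h := by
    intro Θ hΘ h hh
    have hm11x : ∀ x : ℝ, Polynomial.eval x M11 = 4 / 3 * x + 1 / (3 * c) := by
      intro x; rw [hM11]
      simp only [Polynomial.eval_add, Polynomial.eval_mul, Polynomial.eval_C, Polynomial.eval_X]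
    have hm12x : ∀ x : ℝ, Polynomial.eval x M12 = -(b / (3 * c)) - 2 / 3 := by
      intro x; rw [hM12]; simp only [Polynomial.eval_C]
    have hm21x : ∀ x : ℝ, Polynomial.eval x M21
        = s * x + (b + 2 * c) / (15 * c * (b ^ 2 - 4 * a * c)) := by
      intro x; rw [hM21]
      simp only [Polynomial.eval_add, Polynomial.eval_mul, Polynomial.eval_C, Polynomial.eval_X]
    have hm22x : ∀ x : ℝ, Polynomial.eval x M22
        = 4 / 5 * x + -((b ^ 2 + 16 * b * c + 16 * c ^ 2 + 12 * a * c)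
            / (15 * c * (b ^ 2 - 4 * a * c))) := by
      intro x; rw [hM22]
      simp only [Polynomial.eval_add, Polynomial.eval_mul, Polynomial.eval_C, Polynomial.eval_X]
    have E1 : I02 h = Polynomial.eval h M11 * deriv I02 h
        + Polynomial.eval h M12 * deriv I22 h := by
      rw [hm11x, hm12x]
      linear_combination hPF1 h hh
    have E2 : I22 h = Polynomial.eval h M21 * deriv I02 h
        + Polynomial.eval h M22 * deriv I22 h := by
      rw [hm21x, hm22x]
      linear_combination hPF2 h hh + deriv I02 h * h * hs + deriv I02 h * hs
    have hfun1 : ∀ x ∈ S, I02 x = Polynomial.eval x M11 * deriv I02 x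
        + Polynomial.eval x M12 * deriv I22 x := by
      intro x hx
      rw [hm11x, hm12x]
      linear_combination hPF1 x hx
    have hfun2 : ∀ x ∈ S, I22 x = Polynomial.eval x M21 * deriv I02 x
        + Polynomial.eval x M22 * deriv I22 x := by
      intro x hx
      rw [hm21x, hm22x]
      linear_combination hPF2 x hx + deriv I02 x * x * hs + deriv I02 x * hs
    have hEv1 : I02 =ᶠ[nhds h] fun x => Polynomial.eval x M11 * deriv I02 x
        + Polynomial.eval x M12 * deriv I22 x :=
      Filter.eventuallyEq_of_mem (hSo.mem_nhds hh) hfun1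
    have hEv2 : I22 =ᶠ[nhds h] fun x => Polynomial.eval x M21 * deriv I02 x
        + Polynomial.eval x M22 * deriv I22 x :=
      Filter.eventuallyEq_of_mem (hSo.mem_nhds hh) hfun2
    have Hd1 : HasDerivAt (fun x => Polynomial.eval x M11 * deriv I02 x
        + Polynomial.eval x M12 * deriv I22 x)
        (Polynomial.eval h (Polynomial.derivative M11) * deriv I02 h
          + Polynomial.eval h M11 * deriv (deriv I02) h
          + (Polynomial.eval h (Polynomial.derivative M12) * deriv I22 h
            + Polynomial.eval h M12 * deriv (deriv I22) h)) h :=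
      ((M11.hasDerivAt h).mul (hI02' h hh).hasDerivAt).add
        ((M12.hasDerivAt h).mul (hI22' h hh).hasDerivAt)
    have Hd2 : HasDerivAt (fun x => Polynomial.eval x M21 * deriv I02 x
        + Polynomial.eval x M22 * deriv I22 x)
        (Polynomial.eval h (Polynomial.derivative M21) * deriv I02 h
          + Polynomial.eval h M21 * deriv (deriv I02) h
          + (Polynomial.eval h (Polynomial.derivative M22) * deriv I22 h
            + Polynomial.eval h M22 * deriv (deriv I22) h)) h :=
      ((M21.hasDerivAt h).mul (hI02' h hh).hasDerivAt).add
        ((M22.hasDerivAt h).mul (hI22' h hh).hasDerivAt)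
    have ED1 := hEv1.deriv_eq.trans Hd1.deriv
    have ED2 := hEv2.deriv_eq.trans Hd2.deriv
    rw [hdM11, hdM12] at ED1
    rw [hdM21, hdM22] at ED2
    simp only [Polynomial.eval_C, Polynomial.eval_zero] at ED1 ED2
    have S3 : (Polynomial.eval h M11 * Polynomial.eval h M22
          - Polynomial.eval h M12 * Polynomial.eval h M21) * deriv (deriv I02) h
        = (-(1 / 3) * Polynomial.eval h M22 + s * Polynomial.eval h M12) * deriv I02 h
          + (-(1 / 5) * Polynomial.eval h M12) * deriv I22 h := by
      linear_combination (- Polynomial.eval h M22) * ED1 + (Polynomial.eval h M12) * ED2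
    have S4 : (Polynomial.eval h M11 * Polynomial.eval h M22
          - Polynomial.eval h M12 * Polynomial.eval h M21) * deriv (deriv I22) h
        = (1 / 3 * Polynomial.eval h M21 - s * Polynomial.eval h M11) * deriv I02 h
          + (1 / 5 * Polynomial.eval h M11) * deriv I22 h := by
      linear_combination (Polynomial.eval h M21) * ED1 - (Polynomial.eval h M11) * ED2
    have hT1 : ∀ x ∈ S, deriv Θ x
        = Polynomial.eval x (Polynomial.derivative l₁) * I02 x
          + Polynomial.eval x l₁ * deriv I02 x
          + (Polynomial.eval x (Polynomial.derivative l₂) * I22 x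
            + Polynomial.eval x l₂ * deriv I22 x) := by
      intro x hx
      have hΘf : Θ = fun y => Polynomial.eval y l₁ * I02 y + Polynomial.eval y l₂ * I22 y :=
        funext hΘ
      rw [hΘf]
      exact (((l₁.hasDerivAt x).mul (hI02 x hx).hasDerivAt).add
        ((l₂.hasDerivAt x).mul (hI22 x hx).hasDerivAt)).deriv
    have G0 : Θ h = Polynomial.eval h u₁ * deriv I02 h + Polynomial.eval h u₂ * deriv I22 h := by
      simp only [hu₁, hu₂, Polynomial.eval_add, Polynomial.eval_mul]
      linear_combination hΘ h + Polynomial.eval h l₁ * E1 + Polynomial.eval h l₂ * E2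
    have G1 : deriv Θ h
        = Polynomial.eval h v₁ * deriv I02 h + Polynomial.eval h v₂ * deriv I22 h := by
      simp only [hv₁, hv₂, Polynomial.eval_add, Polynomial.eval_mul]
      linear_combination hT1 h hh + Polynomial.eval h (Polynomial.derivative l₁) * E1
        + Polynomial.eval h (Polynomial.derivative l₂) * E2
    have hEv3 : deriv Θ =ᶠ[nhds h] fun x =>
        Polynomial.eval x (Polynomial.derivative l₁) * I02 x
          + Polynomial.eval x l₁ * deriv I02 x
          + (Polynomial.eval x (Polynomial.derivative l₂) * I22 x
            + Polynomial.eval x l₂ * deriv I22 x) :=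
      Filter.eventuallyEq_of_mem (hSo.mem_nhds hh) hT1
    have Hd3 : HasDerivAt (fun x =>
        Polynomial.eval x (Polynomial.derivative l₁) * I02 x
          + Polynomial.eval x l₁ * deriv I02 x
          + (Polynomial.eval x (Polynomial.derivative l₂) * I22 x
            + Polynomial.eval x l₂ * deriv I22 x))
        (Polynomial.eval h (Polynomial.derivative (Polynomial.derivative l₁)) * I02 h
          + Polynomial.eval h (Polynomial.derivative l₁) * deriv I02 h
          + (Polynomial.eval h (Polynomial.derivative l₁) * deriv I02 h
            + Polynomial.eval h l₁ * deriv (deriv I02) h)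
          + (Polynomial.eval h (Polynomial.derivative (Polynomial.derivative l₂)) * I22 h
            + Polynomial.eval h (Polynomial.derivative l₂) * deriv I22 h
            + (Polynomial.eval h (Polynomial.derivative l₂) * deriv I22 h
              + Polynomial.eval h l₂ * deriv (deriv I22) h))) h :=
      ((((Polynomial.derivative l₁).hasDerivAt h).mul (hI02 h hh).hasDerivAt).add
        ((l₁.hasDerivAt h).mul (hI02' h hh).hasDerivAt)).add
        ((((Polynomial.derivative l₂).hasDerivAt h).mul (hI22 h hh).hasDerivAt).add
          ((l₂.hasDerivAt h).mul (hI22' h hh).hasDerivAt))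
    have T2eq := hEv3.deriv_eq.trans Hd3.deriv
    have G2 : Polynomial.eval h dp * deriv (deriv Θ) h
        = Polynomial.eval h w₁ * deriv I02 h + Polynomial.eval h w₂ * deriv I22 h := by
      simp only [hw₁, hw₂, hv₁, hv₂, hdp, hE11, hE12, hE21, hE22,
        Polynomial.derivative_add, Polynomial.derivative_mul, hdM11, hdM12, hdM21, hdM22,
        Polynomial.eval_add, Polynomial.eval_sub, Polynomial.eval_mul, Polynomial.eval_C,
        Polynomial.eval_zero]
      linear_combination
        (Polynomial.eval h M11 * Polynomial.eval h M22
          - Polynomial.eval h M12 * Polynomial.eval h M21) * T2eq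
        + Polynomial.eval h l₁ * S3 + Polynomial.eval h l₂ * S4
        + ((Polynomial.eval h M11 * Polynomial.eval h M22
            - Polynomial.eval h M12 * Polynomial.eval h M21)
          * Polynomial.eval h (Polynomial.derivative (Polynomial.derivative l₁))) * E1
        + ((Polynomial.eval h M11 * Polynomial.eval h M22
            - Polynomial.eval h M12 * Polynomial.eval h M21)
          * Polynomial.eval h (Polynomial.derivative (Polynomial.derivative l₂))) * E2
    exact ⟨G0, G1, G2⟩
  by_cases hα0 : α = 0
  · -- degenerate case: Θ and Θ' are polynomially dependent
    by_cases h10 : v₁ = 0 ∧ u₁ = 0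
    · by_cases h20 : v₂ = 0 ∧ u₂ = 0
      · -- Θ vanishes identically on S
        refine ⟨1, 0, 0, ?_, ?_, ?_, ?_, ?_⟩
        · rintro ⟨h1, -, -⟩; exact one_ne_zero h1
        · simp
        · simp
        · rw [Polynomial.degree_one]
          exact_mod_cast st19_wb4 (Nat.zero_le _)
        · intro Θ hΘ h hh
          obtain ⟨G0, -, -⟩ := key Θ hΘ h hh
          rw [h10.2] at G0
          rw [h20.2] at G0
          simp only [Polynomial.eval_zero, Polynomial.eval_one, zero_mul, one_mul, add_zero,
            zero_add] at G0 ⊢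
          linear_combination G0
      · refine ⟨v₂, -u₂, 0, ?_, ?_, ?_, ?_, ?_⟩
        · rintro ⟨h1, h2, -⟩; exact h20 ⟨h1, neg_eq_zero.mp h2⟩
        · simp
        · rw [Polynomial.degree_neg]
          exact du₂.trans (st19_wb4 (by omega))
        · exact (le_of_lt dv₂).trans (st19_wb4 (by omega))
        · intro Θ hΘ h hh
          obtain ⟨G0, G1, -⟩ := key Θ hΘ h hh
          have hα0e : Polynomial.eval h v₁ * Polynomial.eval h u₂
              - Polynomial.eval h u₁ * Polynomial.eval h v₂ = 0 := by
            have := congrArg (Polynomial.eval h) (hα.symm.trans hα0)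
            simpa only [Polynomial.eval_sub, Polynomial.eval_mul, Polynomial.eval_zero] using this
          simp only [Polynomial.eval_neg, Polynomial.eval_zero, zero_mul, zero_add]
          linear_combination (- Polynomial.eval h u₂) * G1 + Polynomial.eval h v₂ * G0
            - deriv I02 h * hα0e
    · refine ⟨v₁, -u₁, 0, ?_, ?_, ?_, ?_, ?_⟩
      · rintro ⟨h1, h2, -⟩; exact h10 ⟨h1, neg_eq_zero.mp h2⟩
      · simp
      · rw [Polynomial.degree_neg]
        exact du₁.trans (st19_wb4 (by omega))
      · exact dv₁.trans (st19_wb4 (by omega))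
      · intro Θ hΘ h hh
        obtain ⟨G0, G1, -⟩ := key Θ hΘ h hh
        have hα0e : Polynomial.eval h v₁ * Polynomial.eval h u₂
            - Polynomial.eval h u₁ * Polynomial.eval h v₂ = 0 := by
          have := congrArg (Polynomial.eval h) (hα.symm.trans hα0)
          simpa only [Polynomial.eval_sub, Polynomial.eval_mul, Polynomial.eval_zero] using this
        simp only [Polynomial.eval_neg, Polynomial.eval_zero, zero_mul, zero_add]
        linear_combination (- Polynomial.eval h u₁) * G1 + Polynomial.eval h v₁ * G0
          + deriv I22 h * hα0e
  · -- main case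
    refine ⟨γ, β, α * dp, ?_, dR₃, dβ, dγ, ?_⟩
    · rintro ⟨-, -, h3⟩
      exact (mul_ne_zero hα0 hdpne) h3
    · intro Θ hΘ h hh
      obtain ⟨G0, G1, G2⟩ := key Θ hΘ h hh
      simp only [Polynomial.eval_mul]
      linear_combination Polynomial.eval h α * G2 + Polynomial.eval h β * G1
        + Polynomial.eval h γ * G0 + deriv I02 h * F1 h + deriv I22 h * F2 h
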